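/- arXiv:1008.4433 — 2 statements merged into one kernel-verified Lean document; each statement's English description precedes it below -/
import Mathlib

section
/- The polynomial 𝒬_n(x) = Σ_{j=0}^{⌊(n-1)/2⌋} (-1)^j (C(n-1,j) - C(n-1,j-1)) x^{n-2j} (with 𝒬_0 = 1) equals the total weight of all lattice paths of n steps starting at (0,0) which use steps (1,1) of weight x and (1,-1) of weight -1/x and stay strictly above the horizontal axis after the start; formally, 𝒬_n(x) = Σ_{λ ∈ {-1,1}^n : λ_1+⋯+λ_i > 0 for all 1 ≤ i ≤ n} (-1)^{#{i : λ_i = -1}} x^{λ_1+⋯+λ_n}. -/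
open Polynomial

/-- The binomial coefficient `C(a,b)` for integer arguments, with the convention that
`C(a,b) = 0` unless `0 ≤ b ≤ a`. -/
def Cb (a b : ℤ) : ℚ :=
  if 0 ≤ b ∧ b ≤ a then (a.toNat.choose b.toNat : ℚ) else 0

/-- `𝒬_0(x) = 1` and
`𝒬_n(x) = Σ_{j=0}^{⌊(n-1)/2⌋} (-1)^j (C(n-1,j) - C(n-1,j-1)) x^{n-2j}` for `n ≥ 1`. -/
noncomputable def QQ : ℕ → Polynomial ℚ
  | 0 => 1
  | (n + 1) =>
      ∑ j ∈ Finset.range (n / 2 + 1),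
        Polynomial.C ((-1 : ℚ) ^ j * (Cb n j - Cb n ((j : ℤ) - 1))) *
          Polynomial.X ^ (n + 1 - 2 * j)

/-- The step `λ_i ∈ {-1,1}` encoded by a boolean: `true ↦ 1`, `false ↦ -1`. -/
def step {n : ℕ} (f : Fin n → Bool) (i : Fin n) : ℤ := if f i then 1 else -1

/-!
A path with `k` down-steps has weight `(-1)^k x^(n-2k)`, so the right-hand side is
`Σ_k (-1)^k N(n,k) x^(n-2k)`, where `N(n,k)` counts the positive paths with `k` down-steps.
Removing the last step gives the ballot recurrence `N(n+1,k+1) = N(n,k+1) + N(n,k)` for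
`2(k+1) ≤ n`, together with `N(n,0) = 1` and `N(2k,k) = 0`; Pascal's rule then shows
`N(n+1,k) = C(n,k) - C(n,k-1)`, the coefficient in `𝒬_{n+1}`.
-/

open Finset

lemma Cb_natCast (a b : ℕ) : Cb a b = a.choose b := by
  unfold Cb
  split_ifs with h
  · simp
  · rw [Nat.choose_eq_zero_of_lt (by omega), Nat.cast_zero]

lemma Cb_of_neg (a : ℤ) {b : ℤ} (hb : b < 0) : Cb a b = 0 := by
  unfold Cb
  rw [if_neg (by omega)]

lemma Cb_succ_left (m : ℕ) (k : ℤ) : Cb (m + 1) k = Cb m k + Cb m (k - 1) := by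
  rcases lt_or_ge k 0 with hk | hk
  · rw [Cb_of_neg _ hk, Cb_of_neg _ hk, Cb_of_neg _ (by omega), add_zero]
  obtain ⟨b, rfl⟩ := Int.eq_ofNat_of_zero_le hk
  rw [← Nat.cast_succ]
  cases b with
  | zero =>
    rw [Cb_of_neg _ (show ((0 : ℕ) : ℤ) - 1 < 0 by norm_num), Cb_natCast, Cb_natCast,
      Nat.choose_zero_right, Nat.choose_zero_right, add_zero]
  | succ b =>
    rw [show ((b + 1 : ℕ) : ℤ) - 1 = b by omega, Cb_natCast, Cb_natCast, Cb_natCast,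
      Nat.choose_succ_succ', Nat.cast_add, add_comm]

lemma Cb_odd_symm (k : ℕ) : Cb (2 * k + 1 : ℕ) (k + 1 : ℕ) = Cb (2 * k + 1 : ℕ) k := by
  rw [Cb_natCast, Cb_natCast, Nat.choose_symm_half]

section Paths

variable {n : ℕ}

def positivePaths (n : ℕ) : Finset (Fin n → Bool) :=
  univ.filter fun f => ∀ i : Fin n, 0 < ∑ j ∈ Iic i, step f j

def downSteps (f : Fin n → Bool) : ℕ := #{i | f i = false}

def ballotCount (n k : ℕ) : ℕ := #{f ∈ positivePaths n | downSteps f = k}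

lemma sum_step_eq (f : Fin n → Bool) : ∑ j, step f j = n - 2 * downSteps f := by
  have h (j : Fin n) : step f j = 1 - 2 * if f j = false then 1 else 0 := by
    cases hj : f j <;> simp [step, hj]
  simp only [Finset.sum_congr rfl fun j _ => h j, sum_sub_distrib, ← mul_sum, sum_const,
    sum_boole, card_univ, Fintype.card_fin, downSteps]
  simp

lemma step_snoc_castSucc (g : Fin n → Bool) (b : Bool) (i : Fin n) :
    step (Fin.snoc g b) i.castSucc = step g i := by
  simp [step]

lemma sum_Iic_castSucc_step_snoc (g : Fin n → Bool) (b : Bool) (i : Fin n) :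
    ∑ j ∈ Iic i.castSucc, step (Fin.snoc g b) j = ∑ j ∈ Iic i, step g j := by
  rw [← Fin.map_castSuccEmb_Iic, sum_map]
  exact sum_congr rfl fun j _ => step_snoc_castSucc g b j

lemma sum_step_snoc (g : Fin n → Bool) (b : Bool) :
    ∑ j, step (Fin.snoc g b) j = ∑ j, step g j + if b then 1 else -1 := by
  simp only [Fin.sum_univ_castSucc, step_snoc_castSucc]
  simp [step]

lemma downSteps_snoc (g : Fin n → Bool) (b : Bool) :
    downSteps (Fin.snoc g b) = downSteps g + if b then 0 else 1 := by
  simp only [downSteps, card_filter, Fin.sum_univ_castSucc, Fin.snoc_castSucc, Fin.snoc_last]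
  cases b <;> simp

lemma Iic_last_eq_univ : Iic (Fin.last n) = univ := by
  rw [← Fin.top_eq_last, Iic_top]

lemma mem_positivePaths {f : Fin n → Bool} :
    f ∈ positivePaths n ↔ ∀ i, 0 < ∑ j ∈ Iic i, step f j := by
  simp [positivePaths]

lemma snoc_mem_positivePaths_iff (g : Fin n → Bool) (b : Bool) :
    Fin.snoc g b ∈ positivePaths (n + 1) ↔
      g ∈ positivePaths n ∧ 0 < ∑ j, step g j + if b then 1 else -1 := by
  simp only [mem_positivePaths, Fin.forall_fin_succ', sum_Iic_castSucc_step_snoc,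
    Iic_last_eq_univ, sum_step_snoc]

lemma sum_step_pos_of_mem {f : Fin (n + 1) → Bool} (hf : f ∈ positivePaths (n + 1)) :
    0 < ∑ j, step f j := by
  simpa [Iic_last_eq_univ] using mem_positivePaths.1 hf (Fin.last n)

lemma card_filter_snoc (p : (Fin (n + 1) → Bool) → Prop) [DecidablePred p] :
    #{f | p f} = #{g : Fin n → Bool | p (Fin.snoc g true)} + #{g | p (Fin.snoc g false)} := by
  simp only [card_filter]
  rw [← (Fin.snocEquiv fun _ => Bool).sum_comp, Fintype.sum_prod_type, Fintype.sum_bool]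
  rfl

lemma sum_step_nonneg_of_mem {f : Fin n → Bool} (hf : f ∈ positivePaths n) :
    0 ≤ ∑ j, step f j := by
  cases n with
  | zero => simp
  | succ n => exact (sum_step_pos_of_mem hf).le

lemma ballotCount_succ (n k : ℕ) :
    ballotCount (n + 1) k = ballotCount n k +
      #{g ∈ positivePaths n | downSteps g + 1 = k ∧ 2 ≤ ∑ j, step g j} := by
  rw [ballotCount, ballotCount, ← filter_univ_mem (positivePaths (n + 1)), filter_filter,
    card_filter_snoc]
  congr 1 <;> congr 1 <;> ext g <;>
    simp only [mem_filter, mem_univ, true_and, snoc_mem_positivePaths_iff, downSteps_snoc]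
  · grind [sum_step_nonneg_of_mem]
  · grind

lemma ballotCount_zero_right (n : ℕ) : ballotCount n 0 = 1 := by
  induction n with
  | zero => simp [ballotCount, positivePaths, downSteps, univ_unique]
  | succ n ih => simp [ballotCount_succ, ih]

lemma ballotCount_succ_succ {n k : ℕ} (h : 2 * (k + 1) ≤ n) :
    ballotCount (n + 1) (k + 1) = ballotCount n (k + 1) + ballotCount n k := by
  rw [ballotCount_succ, ballotCount]
  congr 2
  refine filter_congr fun g _ => ?_
  rw [sum_step_eq]
  omega

lemma ballotCount_eq_zero {n k : ℕ} (h : n + 1 ≤ 2 * k) : ballotCount (n + 1) k = 0 := by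
  refine card_eq_zero.2 (filter_eq_empty_iff.2 fun f hf hk => ?_)
  have := sum_step_pos_of_mem hf
  rw [sum_step_eq, hk] at this
  omega

end Paths

/-- The boundary case `n + 1 = 2 * k`, where both sides vanish, is included so that the induction
closes. -/
lemma ballotCount_succ_eq (n k : ℕ) (h : 2 * k ≤ n + 1) :
    (ballotCount (n + 1) k : ℚ) = Cb n k - Cb n ((k : ℤ) - 1) := by
  induction n generalizing k with
  | zero =>
    obtain rfl : k = 0 := by omega
    rw [ballotCount_zero_right, Cb_natCast, Cb_of_neg _ (by omega)]
    simp
  | succ n ih =>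
    rcases k with _ | k
    · rw [ballotCount_zero_right, Cb_natCast, Cb_of_neg _ (by omega)]
      simp
    rcases h.eq_or_lt with h | h
    · obtain rfl : n = 2 * k := by omega
      rw [ballotCount_eq_zero (by omega), show ((k + 1 : ℕ) : ℤ) - 1 = (k : ℕ) by omega,
        Cb_odd_symm, Nat.cast_zero, sub_self]
    · rw [ballotCount_succ_succ (by omega), Nat.cast_add, ih _ (by omega), ih _ (by omega)]
      push_cast
      rw [Cb_succ_left, Cb_succ_left, add_sub_cancel_right]
      ring

/-- `𝒬_n(x)` equals the total weight of all `λ ∈ {-1,1}^n` all of whose partial sums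
`λ_1 + ⋯ + λ_i` are strictly positive, where `λ` has weight
`(-1)^{#{i : λ_i = -1}} x^{λ_1 + ⋯ + λ_n}`. -/
theorem stmt7 (n : ℕ) :
    QQ n =
      ∑ f ∈ Finset.univ.filter
          (fun f : Fin n → Bool => ∀ i : Fin n, 0 < ∑ j ∈ Finset.Iic i, step f j),
        Polynomial.C ((-1 : ℚ) ^ (Finset.univ.filter (fun i : Fin n => f i = false)).card) *
          Polynomial.X ^ (∑ j : Fin n, step f j).toNat := by
  change _ = ∑ f ∈ positivePaths n, C ((-1 : ℚ) ^ downSteps f) * X ^ (∑ j, step f j).toNat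
  cases n with
  | zero => simp [QQ, positivePaths, downSteps, univ_unique]
  | succ n =>
    have hdown : ∀ f ∈ positivePaths (n + 1), downSteps f ∈ range (n / 2 + 1) := fun f hf => by
      have := sum_step_pos_of_mem hf
      rw [sum_step_eq] at this
      rw [mem_range]
      omega
    rw [QQ, ← sum_fiberwise_of_maps_to hdown]
    refine sum_congr rfl fun k hk => ?_
    have hweight : ∀ f ∈ {f ∈ positivePaths (n + 1) | downSteps f = k},
        C ((-1 : ℚ) ^ downSteps f) * X ^ (∑ j, step f j).toNat =
          C ((-1 : ℚ) ^ k) * X ^ (n + 1 - 2 * k) := fun f hf => by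
      obtain ⟨-, rfl⟩ := mem_filter.1 hf
      rw [sum_step_eq]
      congr 2
      omega
    rw [sum_congr rfl hweight, sum_const, ← ballotCount, nsmul_eq_mul, ← C_eq_natCast,
      ballotCount_succ_eq n k (by rw [mem_range] at hk; omega), C_mul]
    ring
end

section
/- For all integers n ≥ 1 and 1 ≤ i ≤ ⌊n/2⌋ and 1 ≤ k, the following identity of binomial coefficients holds: Σ_{j=i}^{n-i} [C(n-j,k)·C(j-1,k-1) - C(n-j-1,k)·C(j,k-1)] = ((n+1-2i)/k)·C(n-i,k-1)·C(i-1,k-1). -/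
/-!
With `f j = C(n-j,k) C(j-1,k-1)` the summand is `f j - f (j+1)`, so the sum telescopes to
`C(n-i,k) C(i-1,k-1) - C(i-1,k) C(n-i,k-1)`. The absorption identity
`k C(a,k) = (a-k+1) C(a,k-1)`, valid for all integers `a, k` under the zero convention,
turns this difference into `(n+1-2i)/k · C(n-i,k-1) C(i-1,k-1)`.
-/

open Finset

theorem Int.sum_Icc_sub_add_one {M : Type*} [AddCommGroup M] (f : ℤ → M) {a b : ℤ}
    (hab : a ≤ b + 1) : ∑ j ∈ Icc a b, (f j - f (j + 1)) = f a - f (b + 1) := by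
  induction b, (show a - 1 ≤ b by omega) using Int.leInduction with
  | base => simp
  | succ b hb ih =>
    rw [← insert_Icc_right_eq_Icc_add_one (by omega), sum_insert (by simp), ih (by omega)]
    abel

lemma Cb_of_neg_left {a b : ℤ} (ha : a < 0) : Cb a b = 0 :=
  if_neg (by omega)

lemma Cb_of_neg_right {a b : ℤ} (hb : b < 0) : Cb a b = 0 :=
  if_neg (by omega)

lemma Cb_natCast_s10 (m l : ℕ) : Cb m l = m.choose l := by
  unfold Cb
  split_ifs with h
  · simp
  · rw [Nat.choose_eq_zero_of_lt (by omega), Nat.cast_zero]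

lemma mul_Cb_eq_mul_Cb_sub_one (a k : ℤ) :
    (k : ℚ) * Cb a k = ((a : ℚ) - k + 1) * Cb a (k - 1) := by
  rcases lt_or_ge a 0 with ha | ha
  · simp [Cb_of_neg_left ha]
  rcases lt_or_ge k 1 with hk | hk
  · rw [Cb_of_neg_right (b := k - 1) (by omega), mul_zero]
    rcases eq_or_lt_of_le (show k ≤ 0 by omega) with rfl | hk0
    · simp
    · rw [Cb_of_neg_right hk0, mul_zero]
  lift a to ℕ using ha
  obtain ⟨l, rfl⟩ : ∃ l : ℕ, k = l + 1 := ⟨(k - 1).toNat, by omega⟩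
  rw [add_sub_cancel_right, show (l : ℤ) + 1 = (l + 1 : ℕ) by push_cast; ring, Cb_natCast_s10,
    Cb_natCast_s10]
  rcases le_or_gt l a with hla | hal
  · have h := Nat.choose_succ_right_eq a l
    rw [← Nat.cast_inj (R := ℚ)] at h
    push_cast [hla] at h ⊢
    linear_combination h
  · rw [Nat.choose_eq_zero_of_lt hal, Nat.choose_eq_zero_of_lt (by omega)]
    simp

lemma mul_Cb_cross_sub (a b k : ℤ) :
    (k : ℚ) * (Cb a k * Cb b (k - 1) - Cb b k * Cb a (k - 1))
      = ((a : ℚ) - b) * Cb a (k - 1) * Cb b (k - 1) := by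
  linear_combination
    Cb b (k - 1) * mul_Cb_eq_mul_Cb_sub_one a k - Cb a (k - 1) * mul_Cb_eq_mul_Cb_sub_one b k

theorem stmt10_general (n i k : ℤ) (hi2 : i ≤ n / 2) (hk : 1 ≤ k) :
    ∑ j ∈ Finset.Icc i (n - i),
        (Cb (n - j) k * Cb (j - 1) (k - 1) - Cb (n - j - 1) k * Cb j (k - 1))
      = ((n : ℚ) + 1 - 2 * i) / (k : ℚ) * Cb (n - i) (k - 1) * Cb (i - 1) (k - 1) := by
  set f : ℤ → ℚ := fun j ↦ Cb (n - j) k * Cb (j - 1) (k - 1)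
  calc ∑ j ∈ Icc i (n - i), (Cb (n - j) k * Cb (j - 1) (k - 1) - Cb (n - j - 1) k * Cb j (k - 1))
      = ∑ j ∈ Icc i (n - i), (f j - f (j + 1)) := by
        simp only [f, add_sub_cancel_right, sub_add_eq_sub_sub]
    _ = f i - f (n - i + 1) := Int.sum_Icc_sub_add_one f (by omega)
    _ = _ := by
        simp only [f, add_sub_cancel_right, show n - (n - i + 1) = i - 1 by ring]
        rw [div_mul_eq_mul_div, div_mul_eq_mul_div, eq_div_iff (by positivity)]
        linear_combination (norm := (push_cast; ring)) mul_Cb_cross_sub (n - i) (i - 1) k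

/-- For `n ≥ 1`, `1 ≤ i ≤ ⌊n/2⌋` and `k ≥ 1`:
`Σ_{j=i}^{n-i} [C(n-j,k)C(j-1,k-1) - C(n-j-1,k)C(j,k-1)]
  = ((n+1-2i)/k) C(n-i,k-1) C(i-1,k-1)`. -/
theorem stmt10 (n i k : ℤ) (hn : 1 ≤ n) (hi1 : 1 ≤ i) (hi2 : i ≤ n / 2) (hk : 1 ≤ k) :
    ∑ j ∈ Finset.Icc i (n - i),
        (Cb (n - j) k * Cb (j - 1) (k - 1) - Cb (n - j - 1) k * Cb j (k - 1))
      = ((n : ℚ) + 1 - 2 * i) / (k : ℚ) * Cb (n - i) (k - 1) * Cb (i - 1) (k - 1) :=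
  stmt10_general n i k hi2 hk
end
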